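/- Let d be odd and let M be a subgroup of V = (ZMod d)^{2n}. Then |M|·|M^⊥| = |V| = d^{2n}, where M^⊥ = {v ∈ V : [m,v] = 0 for all m ∈ M} is the symplectic complement. In particular, an isotropic subgroup M satisfies M = M^⊥ if and only if |M| = d^n. -/
import Mathlib


open scoped BigOperators
open Finset Matrix
open scoped ComplexOrder

attribute [instance] Classical.propDecidable

/-- The character `χ(t) = exp(2πit/d)` on `ZMod d`. -/
noncomputable def chi (d : ℕ) (t : ZMod d) : ℂ :=
  Complex.exp (2 * Real.pi * Complex.I * (t.val : ℂ) / (d : ℂ))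

/-- The standard symplectic form on `(Fin n → R) × (Fin n → R)`. -/
def symp (R : Type) [CommRing R] (n : ℕ) (v w : (Fin n → R) × (Fin n → R)) : R :=
  (∑ i, v.1 i * w.2 i) - ∑ i, v.2 i * w.1 i

/-- Single-particle Weyl operator `w(p,q) = χ(-2⁻¹pq) ẑ(p) x̂(q)` on `ℂ^d`. -/
noncomputable def weyl1 (d : ℕ) (p q : ZMod d) : Matrix (ZMod d) (ZMod d) ℂ :=
  Matrix.of fun x y => chi d (-(2⁻¹ : ZMod d) * p * q + p * x) * (if y = x - q then 1 else 0)

/-- Multi-particle Weyl operator on `(ℂ^d)^{⊗n}` in coordinates. -/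
noncomputable def weyl (d n : ℕ) (p q : Fin n → ZMod d) :
    Matrix (Fin n → ZMod d) (Fin n → ZMod d) ℂ :=
  Matrix.of fun x y =>
    chi d (-(2⁻¹ : ZMod d) * (∑ i, p i * q i) + ∑ i, p i * x i) * (if y = x - q then 1 else 0)

/-- Weyl operator indexed by a phase space point. -/
noncomputable def weylV (d n : ℕ) (v : (Fin n → ZMod d) × (Fin n → ZMod d)) :
    Matrix (Fin n → ZMod d) (Fin n → ZMod d) ℂ :=
  weyl d n v.1 v.2

/-- Action of the Weyl operator on wave functions:
`(w(p,q)ψ)(y) = χ(-2⁻¹pq + py) ψ(y-q)`. -/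
noncomputable def weylAct (d n : ℕ) (p q : Fin n → ZMod d) (ψ : (Fin n → ZMod d) → ℂ) :
    (Fin n → ZMod d) → ℂ :=
  fun y => chi d (-(2⁻¹ : ZMod d) * (∑ i, p i * q i) + ∑ i, p i * y i) * ψ (y - q)

/-- Wigner function of a pure state `ψ`. -/
noncomputable def wignerPure (d n : ℕ) [NeZero d] (ψ : (Fin n → ZMod d) → ℂ)
    (p q : Fin n → ZMod d) : ℂ :=
  ((d : ℂ) ^ n)⁻¹ * ∑ ξ : Fin n → ZMod d, chi d (-(∑ i, ξ i * p i)) *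
    (starRingEnd ℂ) (ψ (q - (2⁻¹ : ZMod d) • ξ)) * ψ (q + (2⁻¹ : ZMod d) • ξ)

set_option linter.unusedVariables false
set_option linter.unusedSectionVars false
lemma chi_eq_pow (d : ℕ) [NeZero d] (t : ZMod d) :
    chi d t = Complex.exp (2 * Real.pi * Complex.I / d) ^ t.val := by
  rw [chi, ← Complex.exp_nat_mul]
  ring_nf

lemma omega_pow_d (d : ℕ) [NeZero d] :
    Complex.exp (2 * Real.pi * Complex.I / d) ^ d = 1 := by
  rw [← Complex.exp_nat_mul]
  have hd : (d : ℂ) ≠ 0 := Nat.cast_ne_zero.2 (NeZero.ne d)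
  have : (d : ℂ) * (2 * Real.pi * Complex.I / d) = 2 * Real.pi * Complex.I := by
    field_simp
  rw [this]
  exact Complex.exp_two_pi_mul_I

lemma omega_pow_mod (d : ℕ) [NeZero d] (m : ℕ) :
    Complex.exp (2 * Real.pi * Complex.I / d) ^ (m % d) =
    Complex.exp (2 * Real.pi * Complex.I / d) ^ m := by
  conv_rhs => rw [← Nat.mod_add_div m d]
  rw [pow_add, pow_mul, omega_pow_d, one_pow, mul_one]

lemma chi_add (d : ℕ) [NeZero d] (a b : ZMod d) :
    chi d (a + b) = chi d a * chi d b := by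
  rw [chi_eq_pow, chi_eq_pow, chi_eq_pow, ZMod.val_add, omega_pow_mod, pow_add]

lemma chi_zero (d : ℕ) [NeZero d] : chi d 0 = 1 := by
  rw [chi_eq_pow, ZMod.val_zero, pow_zero]

lemma chi_eq_one_iff (d : ℕ) [NeZero d] (t : ZMod d) : chi d t = 1 ↔ t = 0 := by
  constructor
  · intro h
    rw [chi, Complex.exp_eq_one_iff] at h
    obtain ⟨k, hk⟩ := h
    have hd : (d : ℂ) ≠ 0 := Nat.cast_ne_zero.2 (NeZero.ne d)
    have h2 : (2 * Real.pi * Complex.I : ℂ) ≠ 0 := by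
      simp [Real.pi_ne_zero, Complex.I_ne_zero]
    rw [div_eq_iff hd] at hk
    have hval : (t.val : ℂ) = (k : ℂ) * d :=
      mul_left_cancel₀ h2 (by linear_combination hk)
    have hZ : (t.val : ℤ) = k * d := by exact_mod_cast hval
    have hdvd : d ∣ t.val := by
      have : (d : ℤ) ∣ (t.val : ℤ) := ⟨k, by linarith [hZ]⟩
      exact_mod_cast this
    have : t.val = 0 := Nat.eq_zero_of_dvd_of_lt hdvd (ZMod.val_lt t)
    exact (ZMod.val_eq_zero t).mp this
  · intro h; rw [h, chi_zero d]

noncomputable def chiChar (d : ℕ) [NeZero d] : AddChar (ZMod d) ℂ where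
  toFun := chi d
  map_zero_eq_one' := chi_zero d
  map_add_eq_mul' := chi_add d

lemma sum_chi_hom {A : Type} [AddCommGroup A] [Fintype A] (d : ℕ) [NeZero d]
    (f : A →+ ZMod d) :
    ∑ a : A, chi d (f a) = if (∀ a, f a = 0) then (Fintype.card A : ℂ) else 0 := by
  classical
  have h1 : ∑ a : A, chi d (f a) = ∑ a : A, ((chiChar d).compAddMonoidHom f) a := rfl
  rw [h1, AddChar.sum_eq_ite]
  congr 1
  simp only [eq_iff_iff]
  constructor
  · intro h a
    have : ((chiChar d).compAddMonoidHom f) a = 1 := by rw [h]; simp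
    exact (chi_eq_one_iff d (f a)).mp this
  · intro h
    ext a
    simp only [AddChar.compAddMonoidHom_apply, h a, AddChar.zero_apply]
    exact chi_zero d

section sympstuff
variable (d n : ℕ) [NeZero d]

abbrev PS := ((Fin n → ZMod d) × (Fin n → ZMod d))

def sympL (v : PS d n) : PS d n →+ ZMod d where
  toFun m := symp (ZMod d) n m v
  map_zero' := by simp [symp]
  map_add' a b := by
    simp only [symp, Prod.fst_add, Prod.snd_add, Pi.add_apply, add_mul]
    rw [Finset.sum_add_distrib, Finset.sum_add_distrib]
    ring

def sympR (m : PS d n) : PS d n →+ ZMod d where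
  toFun v := symp (ZMod d) n m v
  map_zero' := by simp [symp]
  map_add' a b := by
    simp only [symp, Prod.fst_add, Prod.snd_add, Pi.add_apply, mul_add]
    rw [Finset.sum_add_distrib, Finset.sum_add_distrib]
    ring

lemma symp_nondeg (m : PS d n) (h : ∀ v, symp (ZMod d) n m v = 0) : m = 0 := by
  have h2 : m.1 = 0 := by
    funext i
    have := h (0, Pi.single i 1)
    simpa [symp, Pi.single_apply, Finset.sum_ite_eq'] using this
  have h3 : m.2 = 0 := by
    funext i
    have := h (Pi.single i 1, 0)
    simp [symp, Pi.single_apply, Finset.sum_ite_eq'] at this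
    simpa using this
  exact Prod.ext h2 h3

end sympstuff

lemma sympL_apply (d n : ℕ) [NeZero d] (v m : PS d n) : sympL d n v m = symp (ZMod d) n m v := rfl
lemma sympR_apply (d n : ℕ) [NeZero d] (m v : PS d n) : sympR d n m v = symp (ZMod d) n m v := rfl


/-- For any subgroup M of phase space `V = (ZMod d)^{2n}`,
`|M|·|M^⊥| = d^{2n}`; in particular an isotropic M equals its symplectic complement iff
`|M| = d^n`. -/
theorem symplectic_complement_card (d n : ℕ) [NeZero d] (hd : Odd d)
    (M : AddSubgroup ((Fin n → ZMod d) × (Fin n → ZMod d))) :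
    Nat.card M * Nat.card {v : (Fin n → ZMod d) × (Fin n → ZMod d) //
        ∀ m ∈ M, symp (ZMod d) n m v = 0} = d ^ (2 * n) ∧
    ((∀ m₁ ∈ M, ∀ m₂ ∈ M, symp (ZMod d) n m₁ m₂ = 0) →
      (((M : Set ((Fin n → ZMod d) × (Fin n → ZMod d))) =
          {v | ∀ m ∈ M, symp (ZMod d) n m v = 0}) ↔ Nat.card M = d ^ n)) := by
  classical
  set A := ((Fin n → ZMod d) × (Fin n → ZMod d)) with hA
  set P : A → Prop := fun v => ∀ m ∈ M, symp (ZMod d) n m v = 0 with hP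
  have hcardA : Fintype.card A = d ^ (2 * n) := by
    rw [Fintype.card_prod, Fintype.card_fun, ZMod.card, Fintype.card_fin,
      two_mul, pow_add]
  -- the double sum
  have hS1 : ∑ m : M, ∑ v : A, chi d (symp (ZMod d) n (m : A) v)
      = (Fintype.card A : ℂ) := by
    have step : ∀ m : M, ∑ v : A, chi d (symp (ZMod d) n (m : A) v)
        = if (m : A) = 0 then (Fintype.card A : ℂ) else 0 := by
      intro m
      have : ∑ v : A, chi d (symp (ZMod d) n (m : A) v)
          = ∑ v : A, chi d ((sympR d n (m : A)) v) := by
        refine Finset.sum_congr rfl fun v _ => by rw [sympR_apply]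
      rw [this, sum_chi_hom]
      congr 1
      simp only [eq_iff_iff]
      constructor
      · intro h
        exact symp_nondeg d n _ fun v => by rw [← sympR_apply]; exact h v
      · intro h v
        rw [sympR_apply, h]
        simp [symp]
    calc ∑ m : M, ∑ v : A, chi d (symp (ZMod d) n (m : A) v)
        = ∑ m : M, if m = (0 : M) then (Fintype.card A : ℂ) else 0 := by
          refine Finset.sum_congr rfl fun m _ => ?_
          rw [step m]
          congr 1
          simp [ZeroMemClass.coe_eq_zero]
      _ = (Fintype.card A : ℂ) := by
          rw [Finset.sum_ite_eq' Finset.univ (0 : M)]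
          simp
  have hS2 : ∑ m : M, ∑ v : A, chi d (symp (ZMod d) n (m : A) v)
      = (Fintype.card M : ℂ) * (Fintype.card {v : A // P v} : ℂ) := by
    rw [Finset.sum_comm]
    have step : ∀ v : A, ∑ m : M, chi d (symp (ZMod d) n (m : A) v)
        = if P v then (Fintype.card M : ℂ) else 0 := by
      intro v
      have : ∑ m : M, chi d (symp (ZMod d) n (m : A) v)
          = ∑ m : M, chi d (((sympL d n v).comp M.subtype) m) := by
        refine Finset.sum_congr rfl fun m _ => by
          rw [AddMonoidHom.comp_apply, AddSubgroup.coe_subtype, sympL_apply]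
      rw [this, sum_chi_hom]
      congr 1
      simp only [eq_iff_iff]
      constructor
      · intro h m hm
        have := h ⟨m, hm⟩
        rwa [AddMonoidHom.comp_apply, AddSubgroup.coe_subtype, sympL_apply] at this
      · intro h m
        rw [AddMonoidHom.comp_apply, AddSubgroup.coe_subtype, sympL_apply]
        exact h m m.2
    calc ∑ v : A, ∑ m : M, chi d (symp (ZMod d) n (m : A) v)
        = ∑ v : A, if P v then (Fintype.card M : ℂ) else 0 :=
          Finset.sum_congr rfl fun v _ => step v
      _ = (Fintype.card M : ℂ) * (Fintype.card {v : A // P v} : ℂ) := by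
          rw [← Finset.sum_filter, Finset.sum_const, nsmul_eq_mul, mul_comm]
          congr 1
          rw [Fintype.card_subtype]
  have hmain : Fintype.card M * Fintype.card {v : A // P v} = d ^ (2 * n) := by
    have : ((Fintype.card M * Fintype.card {v : A // P v} : ℕ) : ℂ)
        = ((d ^ (2 * n) : ℕ) : ℂ) := by
      push_cast
      rw [← hS2, hS1, hcardA]
      push_cast
      ring
    exact_mod_cast this
  have hNM : Nat.card M = Fintype.card M := Nat.card_eq_fintype_card
  have hNP : Nat.card {v : A // P v} = Fintype.card {v : A // P v} :=
    Nat.card_eq_fintype_card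
  refine ⟨by rw [hNM, hNP]; exact hmain, ?_⟩
  intro hiso
  have hsub : (M : Set A) ⊆ {v | P v} := fun m hm m' hm' => hiso m' hm' m hm
  constructor
  · intro heq
    have hc : Nat.card M = Nat.card {v : A // P v} := by
      have h0 : Nat.card (M : Set A) = Nat.card {v : A // P v} := by
        rw [heq]
        exact Nat.card_congr (Equiv.setCongr rfl)
      exact h0
    have h1 : Nat.card M * Nat.card {v : A // P v} = d ^ (2 * n) := by
      rw [hNM, hNP]; exact hmain
    rw [← hc] at h1
    rw [two_mul, pow_add] at h1
    exact Nat.mul_self_inj.mp h1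
  · intro hcard
    have hPcard : Nat.card {v : A // P v} = d ^ n := by
      have hdn : d ^ n ≠ 0 := pow_ne_zero n (NeZero.ne d)
      have h2 : d ^ n * Nat.card {v : A // P v} = d ^ n * d ^ n := by
        calc d ^ n * Nat.card {v : A // P v}
            = Nat.card M * Nat.card {v : A // P v} := by rw [hcard]
          _ = d ^ (2 * n) := by rw [hNM, hNP]; exact hmain
          _ = d ^ n * d ^ n := by rw [two_mul, pow_add]
      exact Nat.eq_of_mul_eq_mul_left (Nat.pos_of_ne_zero hdn) h2
    have hfin : ({v | P v} : Set A).Finite := Set.toFinite _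
    have e1 : ({v | P v} : Set A).ncard = d ^ n := by
      rw [← Nat.card_coe_set_eq]
      exact (Nat.card_congr (Equiv.setCongr rfl)).trans hPcard
    have e2 : (M : Set A).ncard = d ^ n := by
      rw [← Nat.card_coe_set_eq]
      exact hcard
    exact Set.eq_of_subset_of_ncard_le hsub (by rw [e1, e2]) hfin
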